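/- arXiv:1511.04096 — 2 statements merged into one kernel-verified Lean document; each statement's English description precedes it below -/
import Mathlib

section
/- Let $y_1, y_2, y_3, y_4$ be real numbers with $y_2 > 0$ and $y_2 y_3 \ge y_4^2$. Then $\frac{y_2^2}{4}\left(y_1^2 - \frac{4(y_1 y_4 - y_3)}{y_2}\right) \ge \left(y_4 - \frac{y_1 y_2}{2}\right)^2$. Consequently, setting $D = \sqrt{y_1^2 - 4(y_1 y_4 - y_3)/y_2}$, $\hat\mu_a = (y_1 - D)/2$, $\hat\mu_b = (y_1 + D)/2$, both $(y_4 - \hat\mu_a y_2)(\hat\mu_b - \hat\mu_a) \ge 0$ and $(\hat\mu_b y_2 - y_4)(\hat\mu_b - \hat\mu_a) \ge 0$ hold. -/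
/-!
Clearing the denominator, `(y₂²/4)(y₁² - 4(y₁y₄ - y₃)/y₂) - (y₄ - y₁y₂/2)² = y₂y₃ - y₄²`, so the first
claim is exactly `y₂y₃ ≥ y₄²`. Taking square roots, it says `|y₄ - y₁y₂/2| ≤ (y₂/2) D`.
Since `μ̂_b - μ̂_a = D ≥ 0`, `y₄ - μ̂_a y₂ = (y₄ - y₁y₂/2) + (y₂/2) D` and
`μ̂_b y₂ - y₄ = (y₂/2) D - (y₄ - y₁y₂/2)`, both products are nonnegative.
-/

lemma sq_half_mul_discriminant_sub_sq {y1 y2 y3 y4 : ℝ} (hy2 : y2 ≠ 0) :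
    y2 ^ 2 / 4 * (y1 ^ 2 - 4 * (y1 * y4 - y3) / y2) - (y4 - y1 * y2 / 2) ^ 2
      = y2 * y3 - y4 ^ 2 := by
  field_simp
  ring

lemma abs_le_mul_sqrt_of_sq_le {a c E : ℝ} (ha : 0 ≤ a) (h : c ^ 2 ≤ a ^ 2 * E) :
    |c| ≤ a * √E := by
  calc |c| = √(c ^ 2) := (Real.sqrt_sq_eq_abs c).symm
    _ ≤ √(a ^ 2 * E) := Real.sqrt_le_sqrt h
    _ = a * √E := by rw [Real.sqrt_mul (sq_nonneg a), Real.sqrt_sq ha]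

/-- if `y₂ > 0` and `y₂y₃ ≥ y₄²`, then
`(y₂²/4)(y₁² - 4(y₁y₄ - y₃)/y₂) ≥ (y₄ - y₁y₂/2)²`; consequently, with
`D = √(y₁² - 4(y₁y₄ - y₃)/y₂)`, `μ̂_a = (y₁-D)/2`, `μ̂_b = (y₁+D)/2`, both
`(y₄ - μ̂_a y₂)(μ̂_b - μ̂_a) ≥ 0` and `(μ̂_b y₂ - y₄)(μ̂_b - μ̂_a) ≥ 0`. -/
theorem stmt18 (y1 y2 y3 y4 : ℝ) (hy2 : 0 < y2) (h : y2 * y3 ≥ y4 ^ 2)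
    (D μa μb : ℝ)
    (hD : D = Real.sqrt (y1 ^ 2 - 4 * (y1 * y4 - y3) / y2))
    (hμa : μa = (y1 - D) / 2) (hμb : μb = (y1 + D) / 2) :
    y2 ^ 2 / 4 * (y1 ^ 2 - 4 * (y1 * y4 - y3) / y2) ≥ (y4 - y1 * y2 / 2) ^ 2 ∧
    (y4 - μa * y2) * (μb - μa) ≥ 0 ∧
    (μb * y2 - y4) * (μb - μa) ≥ 0 := by
  have hmain : y2 ^ 2 / 4 * (y1 ^ 2 - 4 * (y1 * y4 - y3) / y2) ≥ (y4 - y1 * y2 / 2) ^ 2 := by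
    linarith [sq_half_mul_discriminant_sub_sq (y1 := y1) (y3 := y3) (y4 := y4) hy2.ne']
  have habs : |y4 - y1 * y2 / 2| ≤ y2 / 2 * D := by
    rw [hD]
    exact abs_le_mul_sqrt_of_sq_le (by positivity) (by linarith)
  obtain ⟨hlower, hupper⟩ := abs_le.mp habs
  have hgap : μb - μa = D := by rw [hμa, hμb]; ring
  have hDnonneg : 0 ≤ D := hD ▸ Real.sqrt_nonneg _
  refine ⟨hmain, ?_, ?_⟩
  · rw [hgap]
    exact mul_nonneg (by rw [hμa]; linarith) hDnonneg
  · rw [hgap]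
    exact mul_nonneg (by rw [hμb]; linarith) hDnonneg
end

section
/- Given $\mu_a < \mu_b$, $\sigma_a, \sigma_b > 0$, $\delta > 0$, set $y_1 = \mu_a + \mu_b$, $y_2 = \frac{\sigma_a^2 + \sigma_b^2}{(\mu_b-\mu_a)^2}$, $y_3 = \frac{\mu_b^2\sigma_a^2 + \mu_a^2\sigma_b^2}{(\mu_b-\mu_a)^2}$, $y_4 = \frac{\mu_b\sigma_a^2 + \mu_a\sigma_b^2}{(\mu_b-\mu_a)^2}$. Then $y_1^2 - \frac{4(y_1 y_4 - y_3)}{y_2} = (\mu_b - \mu_a)^2$, and the method-of-moments inversion recovers the parameters: $\frac{y_1 - \sqrt{y_1^2 - 4(y_1y_4-y_3)/y_2}}{2} = \mu_a$, $\frac{y_1 + \sqrt{y_1^2 - 4(y_1y_4-y_3)/y_2}}{2} = \mu_b$, $(y_4 - \mu_a y_2)(\mu_b - \mu_a) = \sigma_a^2$, and $(\mu_b y_2 - y_4)(\mu_b - \mu_a) = \sigma_b^2$. -/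
/-!
Since `y₁ y₄ - y₃ = μ_a μ_b y₂`, the quantity `y₁² - 4 (y₁ y₄ - y₃) / y₂` is the discriminant
`(μ_a + μ_b)² - 4 μ_a μ_b = (μ_b - μ_a)²` of the quadratic with roots `μ_a, μ_b`; the quadratic
formula then returns the means, and `y₂, y₄` are linear in `σ_a², σ_b²` with an invertible system.
-/

section Field

variable {K : Type*} [Field K]

theorem add_mul_moment_sub_moment (a b u v c : K) :
    (a + b) * ((b * u + a * v) / c) - (b ^ 2 * u + a ^ 2 * v) / c = a * b * ((u + v) / c) := by
  ring

theorem moment_discriminant_eq {a b u v : K} (hab : b - a ≠ 0) (huv : u + v ≠ 0) :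
    (a + b) ^ 2 - 4 * ((a + b) * ((b * u + a * v) / (b - a) ^ 2)
      - (b ^ 2 * u + a ^ 2 * v) / (b - a) ^ 2) / ((u + v) / (b - a) ^ 2) = (b - a) ^ 2 := by
  have hy2 : (u + v) / (b - a) ^ 2 ≠ 0 := div_ne_zero huv (pow_ne_zero 2 hab)
  rw [add_mul_moment_sub_moment, mul_div_assoc, mul_div_cancel_right₀ _ hy2]
  ring

theorem moment_inversion_fst {a b : K} (u v : K) (hab : b - a ≠ 0) :
    ((b * u + a * v) / (b - a) ^ 2 - a * ((u + v) / (b - a) ^ 2)) * (b - a) = u := by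
  field_simp
  ring

theorem moment_inversion_snd {a b : K} (u v : K) (hab : b - a ≠ 0) :
    (b * ((u + v) / (b - a) ^ 2) - (b * u + a * v) / (b - a) ^ 2) * (b - a) = v := by
  field_simp
  ring

end Field

theorem add_sub_sqrt_sq_sub_div_two {a b : ℝ} (hab : a ≤ b) :
    (a + b - √((b - a) ^ 2)) / 2 = a := by
  rw [Real.sqrt_sq (sub_nonneg.mpr hab)]
  ring

theorem add_add_sqrt_sq_sub_div_two {a b : ℝ} (hab : a ≤ b) :
    (a + b + √((b - a) ^ 2)) / 2 = b := by
  rw [Real.sqrt_sq (sub_nonneg.mpr hab)]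
  ring

theorem stmt19_general (μa μb σa σb : ℝ) (hμ : μa < μb) (hσa : 0 < σa) (hσb : 0 < σb)
    (y1 y2 y3 y4 : ℝ)
    (hy1 : y1 = μa + μb)
    (hy2 : y2 = (σa ^ 2 + σb ^ 2) / (μb - μa) ^ 2)
    (hy3 : y3 = (μb ^ 2 * σa ^ 2 + μa ^ 2 * σb ^ 2) / (μb - μa) ^ 2)
    (hy4 : y4 = (μb * σa ^ 2 + μa * σb ^ 2) / (μb - μa) ^ 2) :
    y1 ^ 2 - 4 * (y1 * y4 - y3) / y2 = (μb - μa) ^ 2 ∧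
    (y1 - Real.sqrt (y1 ^ 2 - 4 * (y1 * y4 - y3) / y2)) / 2 = μa ∧
    (y1 + Real.sqrt (y1 ^ 2 - 4 * (y1 * y4 - y3) / y2)) / 2 = μb ∧
    (y4 - μa * y2) * (μb - μa) = σa ^ 2 ∧
    (μb * y2 - y4) * (μb - μa) = σb ^ 2 := by
  subst hy1 hy2 hy3 hy4
  have hab : μb - μa ≠ 0 := (sub_pos.mpr hμ).ne'
  have hdisc := moment_discriminant_eq hab (add_pos (pow_pos hσa 2) (pow_pos hσb 2)).ne'
  rw [hdisc]
  exact ⟨rfl, add_sub_sqrt_sq_sub_div_two hμ.le, add_add_sqrt_sq_sub_div_two hμ.le,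
    moment_inversion_fst _ _ hab, moment_inversion_snd _ _ hab⟩

/-- identifiability of the method-of-moments inversion: with
`y₁ = μ_a+μ_b`, `y₂ = (σ_a²+σ_b²)/(μ_b-μ_a)²`, `y₃ = (μ_b²σ_a²+μ_a²σ_b²)/(μ_b-μ_a)²`,
`y₄ = (μ_bσ_a²+μ_aσ_b²)/(μ_b-μ_a)²`, the discriminant equals `(μ_b-μ_a)²` and the
inversion recovers `μ_a, μ_b, σ_a², σ_b²`. -/
theorem stmt19 (μa μb σa σb δ : ℝ) (hμ : μa < μb) (hσa : 0 < σa) (hσb : 0 < σb)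
    (hδ : 0 < δ)
    (y1 y2 y3 y4 : ℝ)
    (hy1 : y1 = μa + μb)
    (hy2 : y2 = (σa ^ 2 + σb ^ 2) / (μb - μa) ^ 2)
    (hy3 : y3 = (μb ^ 2 * σa ^ 2 + μa ^ 2 * σb ^ 2) / (μb - μa) ^ 2)
    (hy4 : y4 = (μb * σa ^ 2 + μa * σb ^ 2) / (μb - μa) ^ 2) :
    y1 ^ 2 - 4 * (y1 * y4 - y3) / y2 = (μb - μa) ^ 2 ∧
    (y1 - Real.sqrt (y1 ^ 2 - 4 * (y1 * y4 - y3) / y2)) / 2 = μa ∧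
    (y1 + Real.sqrt (y1 ^ 2 - 4 * (y1 * y4 - y3) / y2)) / 2 = μb ∧
    (y4 - μa * y2) * (μb - μa) = σa ^ 2 ∧
    (μb * y2 - y4) * (μb - μa) = σb ^ 2 :=
  stmt19_general μa μb σa σb hμ hσa hσb y1 y2 y3 y4 hy1 hy2 hy3 hy4
end
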